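/- arXiv:1103.2722 — 6 statements merged into one kernel-verified Lean document; each statement's English description precedes it below -/
import Mathlib

section
/- In a trapezium ABCD with AD parallel to BC, the vertices A and D lie on a common hyperbola whose asymptotes are the line through C parallel to AB and the line through B parallel to CD. -/
/-- 2x2 determinant of two plane vectors. -/
def det2 (v w : ℝ × ℝ) : ℝ := v.1 * w.2 - v.2 * w.1

/-- If `x` is "parallel" to a nonzero vector `y` (zero cross product), then `x` is a
scalar multiple of `y`, componentwise. -/
lemma det2_aux (x1 x2 y1 y2 : ℝ) (h : x1 * y2 - x2 * y1 = 0)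
    (hy : y1 ≠ 0 ∨ y2 ≠ 0) : ∃ s : ℝ, x1 = s * y1 ∧ x2 = s * y2 := by
  rcases hy with hy | hy
  · refine ⟨x1 / y1, by field_simp, ?_⟩
    field_simp
    linear_combination -h
  · refine ⟨x2 / y2, ?_, by field_simp⟩
    field_simp
    linear_combination h

/-- In a trapezium `ABCD` with `AD ∥ BC`, the vertices `A` and `D` lie on a common
hyperbola whose asymptotes are the line through `C` parallel to `AB` and the line
through `B` parallel to `CD`.  In affine coordinates adapted to the asymptote
directions `u = B - A` and `w = D - C`, centered at the intersection `O` of the two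
asymptote lines, this says that the product of the two coordinates is the same
nonzero constant at `A` and at `D`. -/
theorem trapezium_hyperbola (A B C D O : ℝ × ℝ)
    (hpar : det2 (D - A) (C - B) = 0)
    (hgen : det2 (B - A) (D - C) ≠ 0)
    (hconv : 0 < det2 (B - A) (C - B) ∧ 0 < det2 (C - B) (D - C) ∧
             0 < det2 (D - C) (A - D) ∧ 0 < det2 (A - D) (B - A))
    (hO1 : det2 (O - C) (B - A) = 0)
    (hO2 : det2 (O - B) (D - C) = 0) :
    det2 (A - O) (D - C) * det2 (B - A) (A - O)
      = det2 (D - O) (D - C) * det2 (B - A) (D - O) ∧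
    det2 (A - O) (D - C) * det2 (B - A) (A - O) ≠ 0 := by
  obtain ⟨hc1, _, _, _⟩ := hconv
  obtain ⟨a1, a2⟩ := A
  obtain ⟨b1, b2⟩ := B
  obtain ⟨c1, c2⟩ := C
  obtain ⟨d1, d2⟩ := D
  obtain ⟨o1, o2⟩ := O
  simp only [det2, Prod.mk_sub_mk] at hpar hgen hc1 hO1 hO2 ⊢
  -- nonvanishing of the asymptote directions
  have hu : b1 - a1 ≠ 0 ∨ b2 - a2 ≠ 0 := by
    by_contra h
    push_neg at h
    exact hgen (by rw [h.1, h.2]; ring)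
  have hw : d1 - c1 ≠ 0 ∨ d2 - c2 ≠ 0 := by
    by_contra h
    push_neg at h
    exact hgen (by rw [h.1, h.2]; ring)
  obtain ⟨s, hs1, hs2⟩ := det2_aux (o1 - c1) (o2 - c2) (b1 - a1) (b2 - a2) hO1 hu
  obtain ⟨t, ht1, ht2⟩ := det2_aux (o1 - b1) (o2 - b2) (d1 - c1) (d2 - c2) hO2 hw
  have ho1 : o1 = c1 + s * (b1 - a1) := by linarith
  have ho2 : o2 = c2 + s * (b2 - a2) := by linarith
  subst ho1 ho2
  -- ht1 : c1 + s * (b1 - a1) - b1 = t * (d1 - c1), similarly ht2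
  set k : ℝ := (b1 - a1) * (d2 - c2) - (b2 - a2) * (d1 - c1) with hk
  have hkne : k ≠ 0 := hgen
  -- coordinates of A - O in the asymptote basis
  have e1 : (a1 - (c1 + s * (b1 - a1))) * (d2 - c2)
      - (a2 - (c2 + s * (b2 - a2))) * (d1 - c1) = -k := by
    linear_combination (-(d2 - c2)) * ht1 + (d1 - c1) * ht2
  have e2 : (b1 - a1) * (a2 - (c2 + s * (b2 - a2)))
      - (b2 - a2) * (a1 - (c1 + s * (b1 - a1))) = -t * k := by
    linear_combination (-(b1 - a1)) * ht2 + (b2 - a2) * ht1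
  -- the parallelism condition forces s + t = 0
  have hst : (s + t) * k = 0 := by
    linear_combination hpar - ((b1 - a1) + (d1 - c1)) * ht2
      + ((b2 - a2) + (d2 - c2)) * ht1
  have hstz : s + t = 0 := by
    rcases mul_eq_zero.1 hst with h | h
    · exact h
    · exact absurd h hkne
  -- convexity gives t ≠ 0
  have htk : (b1 - a1) * (c2 - b2) - (b2 - a2) * (c1 - b1) = t * k := by
    linear_combination (b1 - a1) * ht2 - (b2 - a2) * ht1
  have htne : t ≠ 0 := by
    intro h
    rw [htk, h, zero_mul] at hc1
    exact lt_irrefl 0 hc1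
  have hPA : (a1 - (c1 + s * (b1 - a1))) * (d2 - c2)
        - (a2 - (c2 + s * (b2 - a2))) * (d1 - c1) = -k := e1
  constructor
  · linear_combination ((b1 - a1) * (a2 - (c2 + s * (b2 - a2)))
        - (b2 - a2) * (a1 - (c1 + s * (b1 - a1)))) * e1 + (-k) * e2 + k * hst
  · have hval : (a1 - (c1 + s * (b1 - a1))) * (d2 - c2)
        - (a2 - (c2 + s * (b2 - a2))) * (d1 - c1) = -k := e1
    intro h
    have h0 : t * k ^ 2 = 0 := by
      linear_combination h + k * e2
        - ((b1 - a1) * (a2 - (c2 + s * (b2 - a2)))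
          - (b2 - a2) * (a1 - (c1 + s * (b1 - a1)))) * e1
    exact htne (by
      rcases mul_eq_zero.1 h0 with h | h
      · exact h
      · exact absurd h (pow_ne_zero 2 hkne))
end

section
/- For a convex equal-area polygon, the determinant [v_{i+1/2}, n_i] equals [v_{i−1/2}, n_i], and this common value is independent of i, where n_i = P_{i−1} + P_{i+1} − 2P_i is the affine normal at vertex i. -/
lemma det2_plus (a b c : ℝ × ℝ) :
    det2 (c - b) (a + c - (2 : ℝ) • b) = det2 (b - a) (c - b) := by
  simp only [det2, Prod.fst_sub, Prod.snd_sub, Prod.fst_add, Prod.snd_add,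
    Prod.smul_fst, Prod.smul_snd, smul_eq_mul]
  ring

lemma det2_minus (a b c : ℝ × ℝ) :
    det2 (b - a) (a + c - (2 : ℝ) • b) = det2 (b - a) (c - b) := by
  simp only [det2, Prod.fst_sub, Prod.snd_sub, Prod.fst_add, Prod.snd_add,
    Prod.smul_fst, Prod.smul_snd, smul_eq_mul]
  ring

/-- For an equal-area polygon, the determinant `[v_{i+1/2}, n_i]` equals
`[v_{i−1/2}, n_i]`, where `n_i = P_{i−1} + P_{i+1} − 2 P i` is the affine normal at
vertex `i`, and this common value is independent of `i`. -/
theorem equal_area_normal_det_constant (n : ℕ) [NeZero n] (hn : 5 ≤ n)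
    (P : ZMod n → ℝ × ℝ)
    (hEA : ∀ i : ZMod n,
      det2 (P i - P (i - 1)) (P (i + 1) - P i)
        = det2 (P (i + 1) - P i) (P (i + 2) - P (i + 1))) :
    (∀ i : ZMod n,
      det2 (P (i + 1) - P i) (P (i - 1) + P (i + 1) - (2 : ℝ) • P i)
        = det2 (P i - P (i - 1)) (P (i - 1) + P (i + 1) - (2 : ℝ) • P i)) ∧
    (∀ i j : ZMod n,
      det2 (P (i + 1) - P i) (P (i - 1) + P (i + 1) - (2 : ℝ) • P i)
        = det2 (P (j + 1) - P j) (P (j - 1) + P (j + 1) - (2 : ℝ) • P j)) := by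
  set g : ZMod n → ℝ := fun i => det2 (P i - P (i - 1)) (P (i + 1) - P i) with hg
  have hstep : ∀ i : ZMod n, g i = g (i + 1) := by
    intro i
    have := hEA i
    simp only [hg]
    rw [this]
    congr 1 <;> ring_nf
  have hnat : ∀ (i : ZMod n) (k : ℕ), g i = g (i + k) := by
    intro i k
    induction k with
    | zero => simp
    | succ m ih =>
      rw [ih, hstep (i + m)]
      congr 1
      push_cast
      ring
  have hall : ∀ i j : ZMod n, g i = g j := by
    intro i j
    have : j = i + ((j - i).val : ZMod n) := by
      rw [ZMod.natCast_val, ZMod.cast_id]; ring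
    rw [this]
    exact hnat i _
  constructor
  · intro i
    rw [det2_plus (P (i-1)) (P i) (P (i+1)), det2_minus (P (i-1)) (P i) (P (i+1))]
  · intro i j
    rw [det2_plus (P (i-1)) (P i) (P (i+1)), det2_plus (P (j-1)) (P j) (P (j+1))]
    exact hall i j
end

section
/- Let P₁,…,Pₙ, P_i = (x_i, y_i), be a convex equal-area polygon normalized so that det(v_{i±1/2}, n_i) = 1, with discrete affine curvatures μ_{i+1/2}. Then ∑_{i=1}^n (μ_{i+1/2} − μ_{i−1/2}) x_i² = 0, and likewise ∑ (μ_{i+1/2} − μ_{i−1/2}) y_i² = 0. -/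
private lemma shift_sum {n : ℕ} [NeZero n] (F : ZMod n → ℝ) :
    ∑ i : ZMod n, F (i + 1) = ∑ i : ZMod n, F i :=
  Fintype.sum_equiv (Equiv.addRight 1) _ _ (fun _ => rfl)

private lemma scalar_key {n : ℕ} [NeZero n] (x μ : ZMod n → ℝ)
    (e : ∀ i : ZMod n,
      (x i + x (i + 2) - 2 * x (i + 1)) - (x (i - 1) + x (i + 1) - 2 * x i)
        = (-(μ i)) * (x (i + 1) - x i)) :
    ∑ i : ZMod n, (μ i - μ (i - 1)) * x i ^ 2 = 0 := by
  set H : ZMod n → ℝ :=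
    fun i => (x (i - 1) + x (i + 1) - 2 * x i) * x i - x i ^ 2 + x (i - 1) * x (i + 1)
    with hH
  have h1 : ∑ i : ZMod n, (μ i - μ (i - 1)) * x i ^ 2
      = ∑ i : ZMod n, (μ i * x i ^ 2 - μ (i - 1) * x i ^ 2) :=
    Finset.sum_congr rfl (fun i _ => by ring)
  have h2 : ∑ i : ZMod n, μ (i - 1) * x i ^ 2 = ∑ i : ZMod n, μ i * x (i + 1) ^ 2 := by
    rw [← shift_sum (fun i => μ (i - 1) * x i ^ 2)]
    refine Finset.sum_congr rfl (fun i _ => ?_)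
    simp [add_sub_cancel_right]
  have h3 : ∀ i : ZMod n, μ i * x i ^ 2 - μ i * x (i + 1) ^ 2 = H (i + 1) - H i := by
    intro i
    have ei := e i
    have h12 : i + 1 + 1 = i + 2 := by ring
    simp only [hH, add_sub_cancel_right, h12]
    linear_combination (-(x i + x (i + 1))) * ei
  rw [h1, Finset.sum_sub_distrib, h2, ← Finset.sum_sub_distrib]
  calc ∑ i : ZMod n, (μ i * x i ^ 2 - μ i * x (i + 1) ^ 2)
      = ∑ i : ZMod n, (H (i + 1) - H i) := Finset.sum_congr rfl (fun i _ => h3 i)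
    _ = ∑ i : ZMod n, H (i + 1) - ∑ i : ZMod n, H i := Finset.sum_sub_distrib _ _
    _ = 0 := by rw [shift_sum H, sub_self]

/-- For a normalized equal-area polygon with discrete affine curvatures `μ`,
`∑ i (μ_{i+1/2} − μ_{i−1/2}) x_i² = 0` and `∑ i (μ_{i+1/2} − μ_{i−1/2}) y_i² = 0`.
Here `μ i` denotes `μ_{i+1/2}`. -/
theorem equal_area_square_sum_zero (n : ℕ) [NeZero n] (hn : 5 ≤ n)
    (P : ZMod n → ℝ × ℝ) (μ : ZMod n → ℝ)
    (hnorm : ∀ i : ZMod n,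
      det2 (P i - P (i - 1)) (P (i - 1) + P (i + 1) - (2 : ℝ) • P i) = 1 ∧
      det2 (P (i + 1) - P i) (P (i - 1) + P (i + 1) - (2 : ℝ) • P i) = 1)
    (hμ : ∀ i : ZMod n,
      (P i + P (i + 2) - (2 : ℝ) • P (i + 1))
          - (P (i - 1) + P (i + 1) - (2 : ℝ) • P i)
        = (-(μ i)) • (P (i + 1) - P i)) :
    (∑ i : ZMod n, (μ i - μ (i - 1)) * (P i).1 ^ 2 = 0) ∧
    (∑ i : ZMod n, (μ i - μ (i - 1)) * (P i).2 ^ 2 = 0) := by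
  constructor
  · apply scalar_key (fun i => (P i).1) μ
    intro i
    have := congrArg Prod.fst (hμ i)
    simpa [Prod.fst_sub, Prod.fst_add, Prod.smul_fst, smul_eq_mul, two_mul] using this
  · apply scalar_key (fun i => (P i).2) μ
    intro i
    have := congrArg Prod.snd (hμ i)
    simpa [Prod.snd_sub, Prod.snd_add, Prod.smul_snd, smul_eq_mul, two_mul] using this
end

section
/- Let μ_{i+1/2} > 0 for all i (indices mod n). The node Q_{i+1/2} is a cusp of the affine evolute (the adjacent edges e_i and e_{i+1} are not coherently oriented) if and only if Δμ(i)·Δμ(i+1) < 0, i.e., v_{i+1/2} is a strictly sextactic edge. -/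
private lemma evolute_diff (n : ℕ) [NeZero n] (P : ZMod n → ℝ × ℝ) (μ : ZMod n → ℝ)
    (hμ : ∀ i : ZMod n,
      (P i + P (i + 2) - (2 : ℝ) • P (i + 1))
          - (P (i - 1) + P (i + 1) - (2 : ℝ) • P i)
        = (-(μ i)) • (P (i + 1) - P i))
    (hμpos : ∀ i : ZMod n, 0 < μ i) (j : ZMod n) :
    (P j + (μ j)⁻¹ • (P (j-1) + P (j+1) - (2:ℝ) • P j))
      - (P (j-1) + (μ (j-1))⁻¹ • (P (j-2) + P j - (2:ℝ) • P (j-1)))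
      = ((μ (j-1) - μ j) / (μ (j-1) * μ j)) • (P (j-1) + P (j+1) - (2:ℝ) • P j) := by
  have h := hμ (j-1)
  have e1 : j - 1 + 1 = j := by ring
  have e2 : j - 1 + 2 = j + 1 := by ring
  have e3 : j - 1 - 1 = j - 2 := by ring
  rw [e1, e2, e3] at h
  have ha := (hμpos (j-1)).ne'
  have hb := (hμpos j).ne'
  have h1 := congrArg Prod.fst h
  have h2 := congrArg Prod.snd h
  simp only [Prod.fst_add, Prod.fst_sub, Prod.smul_fst, Prod.snd_add, Prod.snd_sub,
    Prod.smul_snd, smul_eq_mul] at h1 h2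
  apply Prod.ext <;>
    simp only [Prod.fst_add, Prod.fst_sub, Prod.smul_fst, Prod.snd_add, Prod.snd_sub,
      Prod.smul_snd, smul_eq_mul]
  · field_simp
    linear_combination (μ j) * h1
  · field_simp
    linear_combination (μ j) * h2

/-- For a convex equal-area polygon with all `μ_{i+1/2} > 0`, the node `Q_{i+1/2}` is a
cusp of the affine evolute (the adjacent evolute edges `e_i` and `e_{i+1}`, oriented by
`n_i` and `n_{i+1}`, are not coherently oriented) if and only if
`Δμ(i)·Δμ(i+1) < 0`, i.e. `v_{i+1/2}` is a strictly sextactic edge.  Here `μ i`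
denotes `μ_{i+1/2}`, `nrm i = P_{i−1} + P_{i+1} − 2P_i`, the node of index `i` is
`Q i = P i + (1/μ i) • nrm i`, and the edge `e_j` is coherently (resp. incoherently)
oriented when `Q j − Q (j−1)` is a positive (resp. negative) multiple of `nrm j`. -/
theorem evolute_cusp_iff_sextactic (n : ℕ) [NeZero n] (hn : 5 ≤ n)
    (P : ZMod n → ℝ × ℝ) (μ : ZMod n → ℝ)
    (hEA : ∀ i : ZMod n,
      det2 (P i - P (i - 1)) (P (i + 1) - P i)
        = det2 (P (i + 1) - P i) (P (i + 2) - P (i + 1)))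
    (hconv : ∀ i : ZMod n, 0 < det2 (P i - P (i - 1)) (P (i + 1) - P i))
    (hμ : ∀ i : ZMod n,
      (P i + P (i + 2) - (2 : ℝ) • P (i + 1))
          - (P (i - 1) + P (i + 1) - (2 : ℝ) • P i)
        = (-(μ i)) • (P (i + 1) - P i))
    (hμpos : ∀ i : ZMod n, 0 < μ i) :
    ∀ i : ZMod n,
      (let nrm : ZMod n → ℝ × ℝ := fun j => P (j - 1) + P (j + 1) - (2 : ℝ) • P j
       let Q : ZMod n → ℝ × ℝ := fun j => P j + (μ j)⁻¹ • nrm j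
       let Coh : ZMod n → Prop := fun j => ∃ t : ℝ, 0 < t ∧ Q j - Q (j - 1) = t • nrm j
       let Anti : ZMod n → Prop := fun j => ∃ t : ℝ, t < 0 ∧ Q j - Q (j - 1) = t • nrm j
       (Coh i ∧ Anti (i + 1)) ∨ (Anti i ∧ Coh (i + 1)))
      ↔ (μ i - μ (i - 1)) * (μ (i + 1) - μ i) < 0 := by
  intro i
  dsimp only
  -- the normal vectors are nonzero
  have hnz : ∀ j : ZMod n, P (j - 1) + P (j + 1) - (2 : ℝ) • P j ≠ 0 := by
    intro j hzero
    have h1 := congrArg Prod.fst hzero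
    have h2 := congrArg Prod.snd hzero
    simp only [Prod.fst_add, Prod.fst_sub, Prod.smul_fst, Prod.snd_add, Prod.snd_sub,
      Prod.smul_snd, smul_eq_mul, Prod.fst_zero, Prod.snd_zero] at h1 h2
    have := hconv j
    simp only [det2, Prod.fst_sub, Prod.snd_sub] at this
    have h3 : (P (j+1)).1 - (P j).1 = (P j).1 - (P (j-1)).1 := by linarith
    have h4 : (P (j+1)).2 - (P j).2 = (P j).2 - (P (j-1)).2 := by linarith
    rw [h3, h4] at this
    linarith
  set c : ZMod n → ℝ := fun j => (μ (j-1) - μ j) / (μ (j-1) * μ j) with hc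
  have hkey : ∀ j : ZMod n,
      (P j + (μ j)⁻¹ • (P (j-1) + P (j+1) - (2:ℝ) • P j))
        - (P (j-1) + (μ (j-1))⁻¹ • (P (j-1-1) + P (j-1+1) - (2:ℝ) • P (j-1)))
        = c j • (P (j-1) + P (j+1) - (2:ℝ) • P j) := by
    intro j
    have e3 : j - 1 - 1 = j - 2 := by ring
    have e1 : j - 1 + 1 = j := by ring
    rw [e3, e1]
    exact evolute_diff n P μ hμ hμpos j
  have huniq : ∀ (j : ZMod n) (t : ℝ),
      t • (P (j-1) + P (j+1) - (2:ℝ) • P j) = c j • (P (j-1) + P (j+1) - (2:ℝ) • P j)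
        → t = c j := by
    intro j t ht
    have h0 : (t - c j) • (P (j-1) + P (j+1) - (2:ℝ) • P j) = 0 := by
      rw [sub_smul, ht, sub_self]
    rcases smul_eq_zero.mp h0 with h | h
    · exact sub_eq_zero.mp h
    · exact absurd h (hnz j)
  have hcohP : ∀ j : ZMod n,
      (∃ t : ℝ, 0 < t ∧
        (P j + (μ j)⁻¹ • (P (j-1) + P (j+1) - (2:ℝ) • P j))
          - (P (j-1) + (μ (j-1))⁻¹ • (P (j-1-1) + P (j-1+1) - (2:ℝ) • P (j-1)))
            = t • (P (j-1) + P (j+1) - (2:ℝ) • P j)) ↔ 0 < c j := by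
    intro j
    constructor
    · rintro ⟨t, ht, heq⟩
      have : t = c j := huniq j t (by rw [← heq, hkey j])
      rwa [this] at ht
    · intro hpos
      exact ⟨c j, hpos, hkey j⟩
  have hantiP : ∀ j : ZMod n,
      (∃ t : ℝ, t < 0 ∧
        (P j + (μ j)⁻¹ • (P (j-1) + P (j+1) - (2:ℝ) • P j))
          - (P (j-1) + (μ (j-1))⁻¹ • (P (j-1-1) + P (j-1+1) - (2:ℝ) • P (j-1)))
            = t • (P (j-1) + P (j+1) - (2:ℝ) • P j)) ↔ c j < 0 := by
    intro j
    constructor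
    · rintro ⟨t, ht, heq⟩
      have : t = c j := huniq j t (by rw [← heq, hkey j])
      rwa [this] at ht
    · intro hneg
      exact ⟨c j, hneg, hkey j⟩
  have hsd : ∀ j : ZMod n, c j * (μ (j-1) * μ j) = μ (j-1) - μ j := by
    intro j
    have ha := (hμpos (j-1)).ne'
    have hb := (hμpos j).ne'
    simp only [hc]
    field_simp
  have hsignp : ∀ j : ZMod n, (0 < c j ↔ 0 < μ (j-1) - μ j) := by
    intro j
    have hd : 0 < μ (j-1) * μ j := mul_pos (hμpos _) (hμpos _)
    have h := hsd j
    constructor <;> intro hx <;> nlinarith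
  have hsignn : ∀ j : ZMod n, (c j < 0 ↔ μ (j-1) - μ j < 0) := by
    intro j
    have hd : 0 < μ (j-1) * μ j := mul_pos (hμpos _) (hμpos _)
    have h := hsd j
    constructor <;> intro hx <;> nlinarith
  rw [hcohP i, hantiP i, hcohP (i+1), hantiP (i+1), hsignp i, hsignn i, hsignp (i+1),
    hsignn (i+1)]
  have e : i + 1 - 1 = i := by ring
  rw [e]
  constructor
  · rintro (⟨h1, h2⟩ | ⟨h1, h2⟩) <;> nlinarith
  · intro h
    rcases mul_neg_iff.mp h with ⟨h1, h2⟩ | ⟨h1, h2⟩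
    · right; constructor <;> linarith
    · left; constructor <;> linarith
end

section
/- The mixed area of two parallel n-gons is symmetric: if P and P' are closed polygons with P'_{i+1} − P'_i parallel to P_{i+1} − P_i for all i, then (1/2)∑_i det(P'_i, P_{i+1} − P_i) = (1/2)∑_i det(P_i, P'_{i+1} − P'_i). -/
/-- The mixed area of two parallel `n`-gons is symmetric:
`(1/2)∑ det(P'_i, P_{i+1} − P_i) = (1/2)∑ det(P_i, P'_{i+1} − P'_i)`. -/
theorem mixed_area_symm (n : ℕ) [NeZero n]
    (P P' : ZMod n → ℝ × ℝ)
    (hpar : ∀ i : ZMod n, det2 (P (i + 1) - P i) (P' (i + 1) - P' i) = 0) :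
    (1 / 2 : ℝ) * ∑ i : ZMod n, det2 (P' i) (P (i + 1) - P i)
      = (1 / 2 : ℝ) * ∑ i : ZMod n, det2 (P i) (P' (i + 1) - P' i) := by
  have key : ∀ i : ZMod n,
      det2 (P' i) (P (i + 1) - P i) - det2 (P i) (P' (i + 1) - P' i)
        = det2 (P i) (P' i) - det2 (P (i + 1)) (P' (i + 1)) := by
    intro i
    have h := hpar i
    simp only [det2, Prod.fst_sub, Prod.snd_sub] at *
    linear_combination h
  have shift : ∑ i : ZMod n, det2 (P (i + 1)) (P' (i + 1))
      = ∑ i : ZMod n, det2 (P i) (P' i) :=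
    Fintype.sum_equiv (Equiv.addRight (1 : ZMod n)) _ _ (fun i => rfl)
  have hsum : ∑ i : ZMod n, det2 (P' i) (P (i + 1) - P i)
      = ∑ i : ZMod n, det2 (P i) (P' (i + 1) - P' i) := by
    rw [← sub_eq_zero, ← Finset.sum_sub_distrib]
    simp_rw [key]
    rw [Finset.sum_sub_distrib, shift, sub_self]
  rw [hsum]
end

section
/- Let P₁,…,Pₙ be a convex equal-area n-gon normalized so that det(v_{i±1/2}, n_i) = 1, with discrete affine curvatures μ_{i+1/2}, enclosed area A, and affine perimeter L = n. Then the normal polygon n = (n₁,…,nₙ) satisfies A(n) = (1/2)∑_i μ_{i+1/2} and A(P, n) = −n/2, where A(·,·) is the mixed area of parallel polygons. -/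
/-- Mixed area `A(X,Y) = (1/2)∑ det(Y_i, X_{i+1} − X_i)` of parallel `n`-gons. -/
noncomputable def mixedArea (n : ℕ) [NeZero n] (X Y : ZMod n → ℝ × ℝ) : ℝ :=
  (1 / 2 : ℝ) * ∑ i : ZMod n, det2 (Y i) (X (i + 1) - X i)

lemma det2_swap (a b : ℝ × ℝ) : det2 a b = -det2 b a := by
  simp [det2]; ring

lemma det2_smul_right (c : ℝ) (a b : ℝ × ℝ) : det2 a (c • b) = c * det2 a b := by
  simp [det2, Prod.smul_def]; ring

/-- For a normalized convex equal-area `n`-gon `P` with discrete affine curvatures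
`μ`, the normal polygon `nrm` (with `nrm i = P_{i−1} + P_{i+1} − 2P_i`) satisfies
`A(nrm) = (1/2)∑ μ_{i+1/2}` and `A(P, nrm) = −n/2`.  Here `μ i` denotes `μ_{i+1/2}`. -/
theorem mixed_areas_of_normal_polygon (n : ℕ) [NeZero n] (hn : 5 ≤ n)
    (P : ZMod n → ℝ × ℝ) (μ : ZMod n → ℝ)
    (hnorm : ∀ i : ZMod n,
      det2 (P i - P (i - 1)) (P (i - 1) + P (i + 1) - (2 : ℝ) • P i) = 1 ∧
      det2 (P (i + 1) - P i) (P (i - 1) + P (i + 1) - (2 : ℝ) • P i) = 1)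
    (hμ : ∀ i : ZMod n,
      (P i + P (i + 2) - (2 : ℝ) • P (i + 1))
          - (P (i - 1) + P (i + 1) - (2 : ℝ) • P i)
        = (-(μ i)) • (P (i + 1) - P i)) :
    (let nrm : ZMod n → ℝ × ℝ := fun j => P (j - 1) + P (j + 1) - (2 : ℝ) • P j
     mixedArea n nrm nrm = (1 / 2 : ℝ) * ∑ i : ZMod n, μ i) ∧
    (let nrm : ZMod n → ℝ × ℝ := fun j => P (j - 1) + P (j + 1) - (2 : ℝ) • P j
     mixedArea n P nrm = -(n : ℝ) / 2) := by
  constructor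
  · intro nrm
    unfold mixedArea
    congr 1
    apply Finset.sum_congr rfl
    intro i _
    have hdiff : nrm (i + 1) - nrm i = (-(μ i)) • (P (i + 1) - P i) := by
      have := hμ i
      simpa [nrm, add_sub_cancel_right, add_assoc, one_add_one_eq_two] using this
    rw [hdiff, det2_smul_right, det2_swap]
    have h2 := (hnorm i).2
    simp only [nrm]
    rw [h2]
    ring
  · intro nrm
    unfold mixedArea
    have : ∀ i : ZMod n, det2 (nrm i) (P (i + 1) - P i) = -1 := by
      intro i
      rw [det2_swap]
      simp only [nrm]
      rw [(hnorm i).2]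
    rw [Finset.sum_congr rfl fun i _ => this i]
    simp
    ring
end
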